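/- Let u be a bounded function on [0,T]×H̄ supported in [0,T]×B̄_R(x^0) for some x^0 ∈ ∂H, and suppose the cycloidal Hölder seminorm [u]_{C^α_s} and the sup norms of u, u_{x_i}, and the second-order weighted norms defining ‖u‖_{C^{2+α}_s} are finite. Then for every ε ∈ (0,1), ‖u‖_{C^α_s([0,T]×H̄)} ≤ ε ‖u‖_{C^{2+α}_s([0,T]×H̄)} + C ε^{-m} ‖u‖_{C([0,T]×H̄)}, where m = m(d,α) and C = C(T,R,d,α) are positive constants. -/

import Mathlib

/-- The cycloidal distance. -/
noncomputable def cyc (d : ℕ) (P Q : ℝ × (Fin (d + 1) → ℝ)) : ℝ :=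
  (∑ i, |P.2 i - Q.2 i|) /
      (Real.sqrt (P.2 (Fin.last d)) + Real.sqrt (Q.2 (Fin.last d)) +
        Real.sqrt (∑ i : Fin d, |P.2 i.castSucc - Q.2 i.castSucc|)) +
    Real.sqrt |P.1 - Q.1|

/-- The closed space-time domain `[0,T] × H̄`. -/
def domT (d : ℕ) (T : ℝ) : Set (ℝ × (Fin (d + 1) → ℝ)) :=
  {P | P.1 ∈ Set.Icc 0 T ∧ 0 ≤ P.2 (Fin.last d)}

/-- Sup norm of `f` over a set `S`. -/
noncomputable def supN (d : ℕ) (S : Set (ℝ × (Fin (d + 1) → ℝ)))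
    (f : ℝ × (Fin (d + 1) → ℝ) → ℝ) : ℝ :=
  sSup ((fun P => |f P|) '' S)

/-- Cycloidal Hölder seminorm of exponent `α` of `f` over a set `S`. -/
noncomputable def semiS (d : ℕ) (α : ℝ) (S : Set (ℝ × (Fin (d + 1) → ℝ)))
    (f : ℝ × (Fin (d + 1) → ℝ) → ℝ) : ℝ :=
  sSup ((fun PQ : (ℝ × (Fin (d + 1) → ℝ)) × (ℝ × (Fin (d + 1) → ℝ)) =>
    |f PQ.1 - f PQ.2| / (cyc d PQ.1 PQ.2) ^ α) '' (S ×ˢ S))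

/-- Cycloidal Hölder norm `‖f‖_{C^α_s(S)}`. -/
noncomputable def holderS (d : ℕ) (α : ℝ) (S : Set (ℝ × (Fin (d + 1) → ℝ)))
    (f : ℝ × (Fin (d + 1) → ℝ) → ℝ) : ℝ :=
  supN d S f + semiS d α S f

/-- The Daskalopoulos–Hamilton–Koch norm `‖u‖_{C^{2+α}_s(S)}`, expressed in terms
of `u`, its time derivative `ut`, spatial first derivatives `ux i`, and spatial
second derivatives `uxx i j`. -/
noncomputable def norm2S (d : ℕ) (α : ℝ) (S : Set (ℝ × (Fin (d + 1) → ℝ)))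
    (u ut : ℝ × (Fin (d + 1) → ℝ) → ℝ)
    (ux : Fin (d + 1) → ℝ × (Fin (d + 1) → ℝ) → ℝ)
    (uxx : Fin (d + 1) → Fin (d + 1) → ℝ × (Fin (d + 1) → ℝ) → ℝ) : ℝ :=
  holderS d α S u + holderS d α S ut + (⨆ i, holderS d α S (ux i)) +
    ⨆ i, ⨆ j, holderS d α S (fun P => P.2 (Fin.last d) * uxx i j P)

/-- Finiteness (boundedness) of all the quantities entering `norm2S`. -/
def FinNorm2 (d : ℕ) (α : ℝ) (S : Set (ℝ × (Fin (d + 1) → ℝ)))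
    (u ut : ℝ × (Fin (d + 1) → ℝ) → ℝ)
    (ux : Fin (d + 1) → ℝ × (Fin (d + 1) → ℝ) → ℝ)
    (uxx : Fin (d + 1) → Fin (d + 1) → ℝ × (Fin (d + 1) → ℝ) → ℝ) : Prop :=
  (BddAbove ((fun P => |u P|) '' S) ∧
    BddAbove ((fun PQ : (ℝ × (Fin (d + 1) → ℝ)) × (ℝ × (Fin (d + 1) → ℝ)) =>
      |u PQ.1 - u PQ.2| / (cyc d PQ.1 PQ.2) ^ α) '' (S ×ˢ S))) ∧
  (BddAbove ((fun P => |ut P|) '' S) ∧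
    BddAbove ((fun PQ : (ℝ × (Fin (d + 1) → ℝ)) × (ℝ × (Fin (d + 1) → ℝ)) =>
      |ut PQ.1 - ut PQ.2| / (cyc d PQ.1 PQ.2) ^ α) '' (S ×ˢ S))) ∧
  (∀ i, BddAbove ((fun P => |ux i P|) '' S) ∧
    BddAbove ((fun PQ : (ℝ × (Fin (d + 1) → ℝ)) × (ℝ × (Fin (d + 1) → ℝ)) =>
      |ux i PQ.1 - ux i PQ.2| / (cyc d PQ.1 PQ.2) ^ α) '' (S ×ˢ S))) ∧
  (∀ i j, BddAbove ((fun P => |P.2 (Fin.last d) * uxx i j P|) '' S) ∧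
    BddAbove ((fun PQ : (ℝ × (Fin (d + 1) → ℝ)) × (ℝ × (Fin (d + 1) → ℝ)) =>
      |PQ.1.2 (Fin.last d) * uxx i j PQ.1 - PQ.2.2 (Fin.last d) * uxx i j PQ.2| /
        (cyc d PQ.1 PQ.2) ^ α) '' (S ×ˢ S)))

/-- `ut`, `ux`, `uxx` really are the (one-sided, within the domain) time
derivative, first and second spatial partial derivatives of `u` on `[0,T] × H̄`. -/
def IsDerivs (d : ℕ) (T : ℝ) (u ut : ℝ × (Fin (d + 1) → ℝ) → ℝ)
    (ux : Fin (d + 1) → ℝ × (Fin (d + 1) → ℝ) → ℝ)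
    (uxx : Fin (d + 1) → Fin (d + 1) → ℝ × (Fin (d + 1) → ℝ) → ℝ) : Prop :=
  (∀ P ∈ domT d T, HasDerivWithinAt (fun τ => u (τ, P.2)) (ut P) (Set.Icc 0 T) P.1) ∧
  (∀ P ∈ domT d T, ∀ i, HasDerivWithinAt (fun s => u (P.1, Function.update P.2 i s))
      (ux i P) {s : ℝ | 0 ≤ Function.update P.2 i s (Fin.last d)} (P.2 i)) ∧
  (∀ P ∈ domT d T, ∀ i j, HasDerivWithinAt (fun s => ux i (P.1, Function.update P.2 j s))
      (uxx i j P) {s : ℝ | 0 ≤ Function.update P.2 j s (Fin.last d)} (P.2 j))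

/-- `u` has (spatial) compact support in the closed Euclidean ball `B̄_R(x⁰)`. -/
def SuppBall (d : ℕ) (R : ℝ) (x0 : Fin (d + 1) → ℝ)
    (u : ℝ × (Fin (d + 1) → ℝ) → ℝ) : Prop :=
  ∀ P : ℝ × (Fin (d + 1) → ℝ), R < Real.sqrt (∑ i, (P.2 i - x0 i) ^ 2) → u P = 0

/-! Only first derivatives enter. Where `u ≠ 0` the height `x_d` is at most `R`, and there
the spatial part `s` of the cycloidal distance controls the `ℓ¹` distance,
`|x - y|₁ ≤ 4 √R s + 4 s²`, while `|t₁ - t₂| ≤ s²`. By the mean value theorem, applied one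
coordinate at a time, `u` is therefore Lipschitz for the cycloidal distance at scales `≤ 1`, with
constant `L ≲ (1 + √R) ‖u‖_{C^{2+α}_s}`. Splitting pairs at a scale `δ`, the Hölder quotient is
at most `L δ^{1-α}` for close pairs and `2 ‖u‖_C δ^{-α}` for distant ones; `δ^{1-α} ≍ ε` gives
the claim with `m = α / (1 - α)`. -/

open Function

lemma Real.sqrt_add_le_sqrt_add_sqrt {a b : ℝ} (ha : 0 ≤ a) (hb : 0 ≤ b) :
    √(a + b) ≤ √a + √b :=
  Real.sqrt_le_iff.2 ⟨by positivity, by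
    nlinarith [Real.sq_sqrt ha, Real.sq_sqrt hb, Real.sqrt_nonneg a, Real.sqrt_nonneg b]⟩

theorem abs_sub_le_mul_sum_abs_of_update {ι : Type*} [Fintype ι] [DecidableEq ι]
    {S : Set (ι → ℝ)} {f : (ι → ℝ) → ℝ} {A : ℝ}
    (hS : ∀ w ∈ S, ∀ z ∈ S, ∀ k, update w k (z k) ∈ S)
    (hf : ∀ w ∈ S, ∀ k b, update w k b ∈ S → |f (update w k b) - f w| ≤ A * |b - w k|)
    {x y : ι → ℝ} (hx : x ∈ S) (hy : y ∈ S) :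
    |f y - f x| ≤ A * ∑ i, |y i - x i| := by
  suffices key : ∀ s : Finset ι,
      s.piecewise y x ∈ S ∧ |f (s.piecewise y x) - f x| ≤ A * ∑ i ∈ s, |y i - x i| by
    simpa only [Finset.piecewise_univ] using (key Finset.univ).2
  intro s
  induction s using Finset.induction_on with
  | empty => simpa using hx
  | insert a s ha ih =>
    rw [Finset.piecewise_insert, Finset.sum_insert ha]
    have hstep := hf _ ih.1 a (y a) (hS _ ih.1 y hy a)
    rw [Finset.piecewise_eq_of_notMem _ _ _ ha] at hstep
    refine ⟨hS _ ih.1 y hy a, ?_⟩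
    calc |f (update (s.piecewise y x) a (y a)) - f x|
        ≤ |f (update (s.piecewise y x) a (y a)) - f (s.piecewise y x)|
          + |f (s.piecewise y x) - f x| := abs_sub_le _ _ _
      _ ≤ A * |y a - x a| + A * ∑ i ∈ s, |y i - x i| := add_le_add hstep ih.2
      _ = _ := by ring

theorem div_rpow_le_of_le_of_le_mul {a s N L δ α : ℝ} (hα0 : 0 < α) (hα1 : α ≤ 1)
    (hs : 0 ≤ s) (hδ : 0 < δ) (hN : 0 ≤ N) (hL : 0 ≤ L)
    (hfar : a ≤ N) (hnear : s < δ → a ≤ L * s) :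
    a / s ^ α ≤ L * δ ^ (1 - α) + N / δ ^ α := by
  have hLδ : 0 ≤ L * δ ^ (1 - α) := by positivity
  have hNδ : 0 ≤ N / δ ^ α := by positivity
  rcases le_or_gt δ s with hδs | hsδ
  · calc a / s ^ α ≤ N / s ^ α := by gcongr
      _ ≤ N / δ ^ α := by gcongr
      _ ≤ _ := le_add_of_nonneg_left hLδ
  rcases hs.eq_or_lt with rfl | hs0
  · rw [Real.zero_rpow hα0.ne', div_zero]
    positivity
  calc a / s ^ α ≤ L * s / s ^ α := by gcongr; exact hnear hsδ
    _ = L * s ^ (1 - α) := by rw [mul_div_assoc, Real.rpow_sub hs0, Real.rpow_one]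
    _ ≤ L * δ ^ (1 - α) := by gcongr
    _ ≤ _ := le_add_of_nonneg_right hNδ

section Cycloidal

variable {d : ℕ}

noncomputable def cycSpatial (d : ℕ) (x y : Fin (d + 1) → ℝ) : ℝ :=
  (∑ i, |x i - y i|) /
    (√(x (Fin.last d)) + √(y (Fin.last d)) + √(∑ i : Fin d, |x i.castSucc - y i.castSucc|))

lemma cyc_eq_cycSpatial_add (P Q : ℝ × (Fin (d + 1) → ℝ)) :
    cyc d P Q = cycSpatial d P.2 Q.2 + √|P.1 - Q.1| := rfl

lemma cycSpatial_nonneg (x y : Fin (d + 1) → ℝ) : 0 ≤ cycSpatial d x y := by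
  unfold cycSpatial
  have : 0 ≤ ∑ i, |x i - y i| := Finset.sum_nonneg fun i _ => abs_nonneg _
  positivity

lemma cyc_nonneg (P Q : ℝ × (Fin (d + 1) → ℝ)) : 0 ≤ cyc d P Q := by
  rw [cyc_eq_cycSpatial_add]
  exact add_nonneg (cycSpatial_nonneg _ _) (Real.sqrt_nonneg _)

lemma sqrt_add_sqrt_le {a b R D : ℝ} (hR : 0 ≤ R) (hD : 0 ≤ D)
    (haR : a ≤ R) (hba : b ≤ a + D) : √a + √b ≤ 2 * √R + √D := by
  have h1 : √a ≤ √R := Real.sqrt_le_sqrt haR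
  have h2 : √b ≤ √R + √D :=
    (Real.sqrt_le_sqrt (by linarith)).trans (Real.sqrt_add_le_sqrt_add_sqrt hR hD)
  linarith

theorem sum_abs_sub_le_cycSpatial {x y : Fin (d + 1) → ℝ} {R : ℝ}
    (hx : 0 ≤ x (Fin.last d)) (hy : 0 ≤ y (Fin.last d)) (hR : 0 ≤ R)
    (hmin : min (x (Fin.last d)) (y (Fin.last d)) ≤ R) :
    ∑ i, |x i - y i| ≤ 4 * √R * cycSpatial d x y + 4 * cycSpatial d x y ^ 2 := by
  set s := cycSpatial d x y
  set D := ∑ i, |x i - y i|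
  set D' := ∑ i : Fin d, |x i.castSucc - y i.castSucc|
  set den := √(x (Fin.last d)) + √(y (Fin.last d)) + √D'
  have hD' : 0 ≤ D' := Finset.sum_nonneg fun i _ => abs_nonneg _
  have hsplit : D = D' + |x (Fin.last d) - y (Fin.last d)| := Fin.sum_univ_castSucc _
  have hD : 0 ≤ D := by rw [hsplit]; positivity
  have hden : den ≤ 2 * √R + 2 * √D := by
    have hsqrtD' : √D' ≤ √D :=
      Real.sqrt_le_sqrt (by linarith [abs_nonneg (x (Fin.last d) - y (Fin.last d))])
    have hxy : √(x (Fin.last d)) + √(y (Fin.last d)) ≤ 2 * √R + √D := by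
      have h1 := neg_abs_le (x (Fin.last d) - y (Fin.last d))
      have h2 := le_abs_self (x (Fin.last d) - y (Fin.last d))
      rcases min_le_iff.1 hmin with h | h
      · exact sqrt_add_sqrt_le hR hD h (by linarith)
      · rw [add_comm]
        exact sqrt_add_sqrt_le hR hD h (by linarith)
    linarith
  have hD_eq : D = s * den := by
    refine (div_mul_cancel_of_imp fun h0 => ?_).symm
    have h1 := Real.sqrt_nonneg (x (Fin.last d))
    have h2 := Real.sqrt_nonneg (y (Fin.last d))
    have h3 := Real.sqrt_nonneg D'
    have ex : x (Fin.last d) = 0 := le_antisymm (Real.sqrt_eq_zero'.1 (by linarith)) hx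
    have ey : y (Fin.last d) = 0 := le_antisymm (Real.sqrt_eq_zero'.1 (by linarith)) hy
    have eD' : D' = 0 := le_antisymm (Real.sqrt_eq_zero'.1 (by linarith)) hD'
    rw [hsplit, ex, ey, eD', sub_zero, abs_zero, add_zero]
  have hs : 0 ≤ s := cycSpatial_nonneg x y
  have hamgm : 2 * s * √D ≤ 2 * s ^ 2 + D / 2 := by
    nlinarith [sq_nonneg (2 * s - √D), Real.sq_sqrt hD]
  linarith [mul_le_mul_of_nonneg_left hden hs]

lemma convex_setOf_update_last_nonneg (w : Fin (d + 1) → ℝ) (k : Fin (d + 1)) :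
    Convex ℝ {σ : ℝ | 0 ≤ update w k σ (Fin.last d)} := by
  refine convex_iff_ordConnected.2 ⟨fun a ha b _ σ hσ => ?_⟩
  by_cases hk : k = Fin.last d
  · subst hk
    simp only [Set.mem_ofPred_eq, update_self] at ha ⊢
    exact ha.trans hσ.1
  · simpa only [Set.mem_ofPred_eq, update_of_ne (Ne.symm hk)] using ha

section Lipschitz

variable {T A B : ℝ} {u ut : ℝ × (Fin (d + 1) → ℝ) → ℝ}
  {ux : Fin (d + 1) → ℝ × (Fin (d + 1) → ℝ) → ℝ}

lemma abs_sub_le_of_abs_timeDeriv_le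
    (hut : ∀ P ∈ domT d T, HasDerivWithinAt (fun τ => u (τ, P.2)) (ut P) (Set.Icc 0 T) P.1)
    (hB : ∀ P ∈ domT d T, |ut P| ≤ B) {t₁ t₂ : ℝ} (ht₁ : t₁ ∈ Set.Icc 0 T)
    (ht₂ : t₂ ∈ Set.Icc 0 T) {x : Fin (d + 1) → ℝ} (hx : 0 ≤ x (Fin.last d)) :
    |u (t₁, x) - u (t₂, x)| ≤ B * |t₁ - t₂| :=
  Convex.norm_image_sub_le_of_norm_hasDerivWithin_le (f := fun τ => u (τ, x))
    (fun τ hτ => hut (τ, x) ⟨hτ, hx⟩) (fun τ hτ => hB (τ, x) ⟨hτ, hx⟩)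
    (convex_Icc 0 T) ht₂ ht₁

lemma abs_sub_update_le_of_abs_spaceDeriv_le
    (hux : ∀ P ∈ domT d T, ∀ i, HasDerivWithinAt (fun s => u (P.1, update P.2 i s))
      (ux i P) {s : ℝ | 0 ≤ update P.2 i s (Fin.last d)} (P.2 i))
    (hA : ∀ i, ∀ P ∈ domT d T, |ux i P| ≤ A) {t : ℝ} (ht : t ∈ Set.Icc 0 T)
    {w : Fin (d + 1) → ℝ} (hw : 0 ≤ w (Fin.last d)) (k : Fin (d + 1)) (b : ℝ)
    (hb : 0 ≤ update w k b (Fin.last d)) :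
    |u (t, update w k b) - u (t, w)| ≤ A * |b - w k| := by
  have hderiv : ∀ σ ∈ {σ : ℝ | 0 ≤ update w k σ (Fin.last d)},
      HasDerivWithinAt (fun σ => u (t, update w k σ)) (ux k (t, update w k σ))
        {σ : ℝ | 0 ≤ update w k σ (Fin.last d)} σ := fun σ hσ => by
    simpa only [update_idem, update_self] using hux (t, update w k σ) ⟨ht, hσ⟩ k
  have hwk : w k ∈ {σ : ℝ | 0 ≤ update w k σ (Fin.last d)} := by
    simpa only [Set.mem_ofPred_eq, update_eq_self] using hw
  simpa only [update_eq_self, Real.norm_eq_abs] using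
    Convex.norm_image_sub_le_of_norm_hasDerivWithin_le hderiv
      (fun σ hσ => hA k (t, update w k σ) ⟨ht, hσ⟩)
      (convex_setOf_update_last_nonneg w k) hwk hb

lemma abs_sub_le_of_abs_spaceDeriv_le
    (hux : ∀ P ∈ domT d T, ∀ i, HasDerivWithinAt (fun s => u (P.1, update P.2 i s))
      (ux i P) {s : ℝ | 0 ≤ update P.2 i s (Fin.last d)} (P.2 i))
    (hA : ∀ i, ∀ P ∈ domT d T, |ux i P| ≤ A) {t : ℝ} (ht : t ∈ Set.Icc 0 T)
    {x y : Fin (d + 1) → ℝ} (hx : 0 ≤ x (Fin.last d)) (hy : 0 ≤ y (Fin.last d)) :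
    |u (t, x) - u (t, y)| ≤ A * ∑ i, |x i - y i| := by
  refine abs_sub_le_mul_sum_abs_of_update (S := {z | 0 ≤ z (Fin.last d)})
    (f := fun z => u (t, z)) (fun w hw z hz k => ?_) (fun w hw k b hb => ?_) hy hx
  · by_cases hk : k = Fin.last d
    · subst hk; simpa using hz
    · simpa [update_of_ne (Ne.symm hk)] using hw
  · exact abs_sub_update_le_of_abs_spaceDeriv_le hux hA ht hw k b hb

theorem abs_sub_le_mul_cyc
    (hut : ∀ P ∈ domT d T, HasDerivWithinAt (fun τ => u (τ, P.2)) (ut P) (Set.Icc 0 T) P.1)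
    (hux : ∀ P ∈ domT d T, ∀ i, HasDerivWithinAt (fun s => u (P.1, update P.2 i s))
      (ux i P) {s : ℝ | 0 ≤ update P.2 i s (Fin.last d)} (P.2 i))
    (hA0 : 0 ≤ A) (hA : ∀ i, ∀ P ∈ domT d T, |ux i P| ≤ A)
    (hB0 : 0 ≤ B) (hB : ∀ P ∈ domT d T, |ut P| ≤ B) {R : ℝ} (hR : 0 ≤ R)
    {P Q : ℝ × (Fin (d + 1) → ℝ)} (hP : P ∈ domT d T) (hQ : Q ∈ domT d T)
    (hmin : min (P.2 (Fin.last d)) (Q.2 (Fin.last d)) ≤ R) (hPQ : cyc d P Q ≤ 1) :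
    |u P - u Q| ≤ (4 * √R + 4) * (A + B) * cyc d P Q := by
  obtain ⟨t₁, x⟩ := P
  obtain ⟨t₂, y⟩ := Q
  set sx := cycSpatial d x y
  set st := √|t₁ - t₂|
  have hcyc : cyc d (t₁, x) (t₂, y) = sx + st := rfl
  have hsx : 0 ≤ sx := cycSpatial_nonneg x y
  have hst : 0 ≤ st := Real.sqrt_nonneg _
  have htime : |u (t₁, x) - u (t₂, x)| ≤ B * st ^ 2 := by
    rw [Real.sq_sqrt (abs_nonneg _)]
    exact abs_sub_le_of_abs_timeDeriv_le hut hB hP.1 hQ.1 hP.2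
  have hspace : |u (t₂, x) - u (t₂, y)| ≤ A * (4 * √R * sx + 4 * sx ^ 2) :=
    (abs_sub_le_of_abs_spaceDeriv_le hux hA hQ.1 hP.2 hQ.2).trans
      (by gcongr; exact sum_abs_sub_le_cycSpatial hP.2 hQ.2 hR hmin)
  have hsx1 : sx ≤ 1 := by linarith
  have hst1 : st ≤ 1 := by linarith
  rw [hcyc]
  calc |u (t₁, x) - u (t₂, y)| ≤ |u (t₁, x) - u (t₂, x)| + |u (t₂, x) - u (t₂, y)| :=
        abs_sub_le _ _ _
    _ ≤ B * st ^ 2 + A * (4 * √R * sx + 4 * sx ^ 2) := add_le_add htime hspace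
    _ ≤ B * st + A * ((4 * √R + 4) * sx) := by
        have hst2 : st ^ 2 ≤ st := pow_le_of_le_one hst hst1 two_ne_zero
        have hsx2 : sx ^ 2 ≤ sx := pow_le_of_le_one hsx hsx1 two_ne_zero
        gcongr
        linarith
    _ ≤ (4 * √R + 4) * (A + B) * (sx + st) := by
        nlinarith [mul_nonneg hA0 hst, mul_nonneg hB0 hsx, mul_nonneg hB0 hst,
          Real.sqrt_nonneg R]

end Lipschitz

lemma last_le_of_suppBall {R : ℝ} {x0 : Fin (d + 1) → ℝ} {u : ℝ × (Fin (d + 1) → ℝ) → ℝ}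
    (hx0 : x0 (Fin.last d) = 0) (hsupp : SuppBall d R x0 u) {P : ℝ × (Fin (d + 1) → ℝ)}
    (hu : u P ≠ 0) : P.2 (Fin.last d) ≤ R := by
  by_contra! hR
  refine hu (hsupp P (hR.trans_le ?_))
  calc P.2 (Fin.last d) ≤ |P.2 (Fin.last d) - x0 (Fin.last d)| := by
        rw [hx0, sub_zero]; exact le_abs_self _
    _ = √((P.2 (Fin.last d) - x0 (Fin.last d)) ^ 2) := (Real.sqrt_sq_eq_abs _).symm
    _ ≤ √(∑ i, (P.2 i - x0 i) ^ 2) :=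
        Real.sqrt_le_sqrt (Finset.single_le_sum (fun i _ => sq_nonneg (P.2 i - x0 i))
          (Finset.mem_univ _))

section Norms

variable {α : ℝ} {S : Set (ℝ × (Fin (d + 1) → ℝ))} {f : ℝ × (Fin (d + 1) → ℝ) → ℝ}

lemma supN_nonneg : 0 ≤ supN d S f :=
  Real.sSup_nonneg (by rintro _ ⟨P, _, rfl⟩; exact abs_nonneg _)

lemma semiS_nonneg : 0 ≤ semiS d α S f :=
  Real.sSup_nonneg (by
    rintro _ ⟨PQ, _, rfl⟩
    exact div_nonneg (abs_nonneg _) (Real.rpow_nonneg (cyc_nonneg _ _) _))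

lemma holderS_nonneg : 0 ≤ holderS d α S f :=
  add_nonneg supN_nonneg semiS_nonneg

lemma abs_le_supN (hf : BddAbove ((fun P => |f P|) '' S)) {P : ℝ × (Fin (d + 1) → ℝ)}
    (hP : P ∈ S) : |f P| ≤ supN d S f :=
  le_csSup hf ⟨P, hP, rfl⟩

lemma abs_le_holderS (hf : BddAbove ((fun P => |f P|) '' S)) {P : ℝ × (Fin (d + 1) → ℝ)}
    (hP : P ∈ S) : |f P| ≤ holderS d α S f :=
  (abs_le_supN hf hP).trans (le_add_of_nonneg_right semiS_nonneg)

lemma semiS_le {M : ℝ} (hM : 0 ≤ M)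
    (h : ∀ P ∈ S, ∀ Q ∈ S, |f P - f Q| / cyc d P Q ^ α ≤ M) : semiS d α S f ≤ M :=
  Real.sSup_le (by rintro _ ⟨⟨P, Q⟩, ⟨hP, hQ⟩, rfl⟩; exact h P hP Q hQ) hM

end Norms

theorem semiS_le_interpolation {T R α A B ε : ℝ} {u ut : ℝ × (Fin (d + 1) → ℝ) → ℝ}
    {ux : Fin (d + 1) → ℝ × (Fin (d + 1) → ℝ) → ℝ} {x0 : Fin (d + 1) → ℝ}
    (hα : α ∈ Set.Ioo (0 : ℝ) 1) (hR : 0 ≤ R)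
    (hx0 : x0 (Fin.last d) = 0) (hsupp : SuppBall d R x0 u)
    (hut : ∀ P ∈ domT d T, HasDerivWithinAt (fun τ => u (τ, P.2)) (ut P) (Set.Icc 0 T) P.1)
    (hux : ∀ P ∈ domT d T, ∀ i, HasDerivWithinAt (fun s => u (P.1, update P.2 i s))
      (ux i P) {s : ℝ | 0 ≤ update P.2 i s (Fin.last d)} (P.2 i))
    (hA0 : 0 ≤ A) (hA : ∀ i, ∀ P ∈ domT d T, |ux i P| ≤ A)
    (hB0 : 0 ≤ B) (hB : ∀ P ∈ domT d T, |ut P| ≤ B)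
    (hu : BddAbove ((fun P => |u P|) '' domT d T)) (hε0 : 0 < ε) (hε1 : ε ≤ 1) :
    semiS d α (domT d T) u ≤ ε * (A + B) +
      2 * (4 * √R + 4) ^ (α / (1 - α)) * ε ^ (-(α / (1 - α))) * supN d (domT d T) u := by
  obtain ⟨hα0, hα1⟩ := hα
  set K := 4 * √R + 4
  set m := α / (1 - α)
  set N := supN d (domT d T) u
  have hK : 1 ≤ K := by linarith [Real.sqrt_nonneg R]
  have hεK : 0 < ε / K := by positivity
  have h1α : 0 < 1 - α := by linarith
  set δ := (ε / K) ^ (1 / (1 - α))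
  have hδ : 0 < δ := by positivity
  have hδ1 : δ ≤ 1 :=
    Real.rpow_le_one hεK.le ((div_le_one (by linarith)).2 (hε1.trans hK)) (by positivity)
  have hδ1α : K * δ ^ (1 - α) = ε := by
    rw [← Real.rpow_mul hεK.le, one_div_mul_cancel h1α.ne', Real.rpow_one]
    field_simp
  have hδα : 2 * N / δ ^ α = 2 * K ^ m * ε ^ (-m) * N := by
    have hδm : δ ^ α = (ε / K) ^ m := by rw [← Real.rpow_mul hεK.le, one_div_mul_eq_div]
    have : 0 < ε ^ m := by positivity
    rw [hδm, Real.div_rpow hε0.le (by linarith), Real.rpow_neg hε0.le]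
    field_simp
  have hN : 0 ≤ N := supN_nonneg
  refine semiS_le (by positivity) fun P hP Q hQ => ?_
  have hfar : |u P - u Q| ≤ 2 * N := by
    linarith [abs_sub (u P) (u Q), abs_le_supN hu hP, abs_le_supN hu hQ]
  have hnear : cyc d P Q < δ → |u P - u Q| ≤ K * (A + B) * cyc d P Q := fun hPQ => by
    by_cases h0 : u P = 0 ∧ u Q = 0
    · rw [h0.1, h0.2, sub_zero, abs_zero]
      exact mul_nonneg (by positivity) (cyc_nonneg P Q)
    have hmin : min (P.2 (Fin.last d)) (Q.2 (Fin.last d)) ≤ R := by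
      rcases not_and_or.1 h0 with h | h
      · exact min_le_of_left_le (last_le_of_suppBall hx0 hsupp h)
      · exact min_le_of_right_le (last_le_of_suppBall hx0 hsupp h)
    exact abs_sub_le_mul_cyc hut hux hA0 hA hB0 hB hR hP hQ hmin (hPQ.le.trans hδ1)
  calc |u P - u Q| / cyc d P Q ^ α ≤ K * (A + B) * δ ^ (1 - α) + 2 * N / δ ^ α :=
        div_rpow_le_of_le_of_le_mul hα0 hα1.le (cyc_nonneg P Q) hδ (by positivity)
          (by positivity) hfar hnear
    _ = ε * (A + B) + 2 * K ^ m * ε ^ (-m) * N := by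
        rw [hδα, ← hδ1α]; ring

lemma holderS_add_iSup_holderS_le_norm2S {α : ℝ} {S : Set (ℝ × (Fin (d + 1) → ℝ))}
    {u ut : ℝ × (Fin (d + 1) → ℝ) → ℝ} {ux : Fin (d + 1) → ℝ × (Fin (d + 1) → ℝ) → ℝ}
    {uxx : Fin (d + 1) → Fin (d + 1) → ℝ × (Fin (d + 1) → ℝ) → ℝ} :
    (⨆ i, holderS d α S (ux i)) + holderS d α S ut ≤ norm2S d α S u ut ux uxx := by
  have hu : 0 ≤ holderS d α S u := holderS_nonneg
  have huxx : 0 ≤ ⨆ i, ⨆ j, holderS d α S (fun P => P.2 (Fin.last d) * uxx i j P) :=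
    Real.iSup_nonneg fun _ => Real.iSup_nonneg fun _ => holderS_nonneg
  unfold norm2S
  linarith

end Cycloidal

theorem interpolation_Calpha_general (d : ℕ) (α : ℝ) (hα : α ∈ Set.Ioo (0 : ℝ) 1) :
    ∃ m : ℝ, 0 < m ∧ ∀ T R : ℝ, 0 < T → 0 < R →
      ∃ C : ℝ, 0 < C ∧
        ∀ (u ut : ℝ × (Fin (d + 1) → ℝ) → ℝ)
          (ux : Fin (d + 1) → ℝ × (Fin (d + 1) → ℝ) → ℝ)
          (uxx : Fin (d + 1) → Fin (d + 1) → ℝ × (Fin (d + 1) → ℝ) → ℝ)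
          (x0 : Fin (d + 1) → ℝ),
          x0 (Fin.last d) = 0 →
          SuppBall d R x0 u →
          IsDerivs d T u ut ux uxx →
          FinNorm2 d α (domT d T) u ut ux uxx →
          ∀ ε ∈ Set.Ioo (0 : ℝ) 1,
            holderS d α (domT d T) u ≤
              ε * norm2S d α (domT d T) u ut ux uxx +
                C * ε ^ (-m) * supN d (domT d T) u := by
  set m := α / (1 - α)
  have hm : 0 < m := div_pos hα.1 (by linarith [hα.2])
  refine ⟨m, hm, fun T R _ hR => ?_⟩
  refine ⟨2 * (4 * √R + 4) ^ m + 1, by positivity, ?_⟩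
  intro u ut ux uxx x0 hx0 hsupp hder hfin ε ⟨hε0, hε1⟩
  set A := ⨆ i, holderS d α (domT d T) (ux i)
  have hA_le : ∀ i, holderS d α (domT d T) (ux i) ≤ A :=
    le_ciSup (Set.finite_range _).bddAbove
  have hsemi := semiS_le_interpolation (B := holderS d α (domT d T) ut) hα hR.le hx0 hsupp
    hder.1 hder.2.1 (holderS_nonneg.trans (hA_le 0))
    (fun i P hP => (abs_le_holderS (hfin.2.2.1 i).1 hP).trans (hA_le i)) holderS_nonneg
    (fun P hP => abs_le_holderS hfin.2.1.1 hP) hfin.1.1 hε0 hε1.le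
  have hnorm : ε * (A + holderS d α (domT d T) ut) ≤ ε * norm2S d α (domT d T) u ut ux uxx :=
    mul_le_mul_of_nonneg_left holderS_add_iSup_holderS_le_norm2S hε0.le
  have hN : supN d (domT d T) u ≤ ε ^ (-m) * supN d (domT d T) u :=
    le_mul_of_one_le_left supN_nonneg
      (Real.one_le_rpow_of_pos_of_le_one_of_nonpos hε0 hε1.le (neg_nonpos.2 hm.le))
  change supN d (domT d T) u + semiS d α (domT d T) u ≤ _
  linarith

/-- Interpolation inequality (i): for `u ∈ C^{2+α}_s([0,T]×H̄)` compactly supported in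
`[0,T]×B̄_R(x⁰)` with `x⁰ ∈ ∂H`, and every `ε ∈ (0,1)`,
`‖u‖_{C^α_s} ≤ ε ‖u‖_{C^{2+α}_s} + C ε^{-m} ‖u‖_C`, where `m = m(d,α) > 0` and
`C = C(T,R,d,α) > 0`. -/
theorem interpolation_Calpha (d : ℕ) (hd : 1 ≤ d) (α : ℝ) (hα : α ∈ Set.Ioo (0 : ℝ) 1) :
    ∃ m : ℝ, 0 < m ∧ ∀ T R : ℝ, 0 < T → 0 < R →
      ∃ C : ℝ, 0 < C ∧
        ∀ (u ut : ℝ × (Fin (d + 1) → ℝ) → ℝ)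
          (ux : Fin (d + 1) → ℝ × (Fin (d + 1) → ℝ) → ℝ)
          (uxx : Fin (d + 1) → Fin (d + 1) → ℝ × (Fin (d + 1) → ℝ) → ℝ)
          (x0 : Fin (d + 1) → ℝ),
          x0 (Fin.last d) = 0 →
          SuppBall d R x0 u →
          IsDerivs d T u ut ux uxx →
          FinNorm2 d α (domT d T) u ut ux uxx →
          ∀ ε ∈ Set.Ioo (0 : ℝ) 1,
            holderS d α (domT d T) u ≤
              ε * norm2S d α (domT d T) u ut ux uxx +
                C * ε ^ (-m) * supN d (domT d T) u :=
  interpolation_Calpha_general d α hα
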